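/- arXiv:2602.03794 — 2 statements merged into one kernel-verified Lean document; each statement's English description precedes it below -/
import Mathlib

section
/- Let X, Y and Z_1, …, Z_m be finitely-valued random variables on a common probability space such that for each i ∈ {1, …, m}, Z_i is conditionally independent of Z_{<i} = (Z_1, …, Z_{i−1}) given (X, Y) (equivalently, I(Z_i; Z_{<i} | X, Y) = 0), and suppose there is a real number I_b with I(Z_i; Y | X) = I_b for every i. Then I(Z_{1:m}; Y | X) ≤ min( H(Y | X), m · I_b ). -/
open MeasureTheory

/-- Shannon entropy (in nats) of a finitely-valued random variable `X` under `μ`. -/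
noncomputable def entH {Ω : Type*} [MeasurableSpace Ω] (μ : Measure Ω)
    {S : Type*} [Fintype S] (X : Ω → S) : ℝ :=
  ∑ s : S, Real.negMulLog ((μ (X ⁻¹' {s})).toReal)

/-- Conditional Shannon entropy `H(Y | X) = H(X, Y) - H(X)`. -/
noncomputable def condEntH {Ω : Type*} [MeasurableSpace Ω] (μ : Measure Ω)
    {S T : Type*} [Fintype S] [Fintype T] (Y : Ω → T) (X : Ω → S) : ℝ :=
  entH μ (fun ω => (X ω, Y ω)) - entH μ X

/-- Conditional mutual information `I(A; B | C) = H(A | C) - H(A | (B, C))`. -/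
noncomputable def condMI {Ω : Type*} [MeasurableSpace Ω] (μ : Measure Ω)
    {A B C : Type*} [Fintype A] [Fintype B] [Fintype C]
    (fA : Ω → A) (fB : Ω → B) (fC : Ω → C) : ℝ :=
  condEntH μ fA fC - condEntH μ fA (fun ω => (fB ω, fC ω))

/-!
Every conditional mutual information is a signed sum of joint entropies, and a joint entropy
depends only on the partition of `Ω` into level sets of the variable; symmetry and the chain
rule follow. Nonnegativity of `I(A; B | C)` reduces, on each level set of `C`, to Gibbs'
inequality, i.e. to `log x ≤ x - 1` applied to `x = P(a) P(b) / (P(a, b) M)`.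

The bound by `H(Y | X)` is `I(Z; Y | X) = H(Y | X) - H(Y | Z, X)`. For the bound `m I_b`, the
chain rule gives `I(Z_{≤i}; Y | X) = I(Z_{<i}; Y | X) + I(Z_i; Y | Z_{<i}, X)`, and since
`I(Z_i; (Y, Z_{<i}) | X)` can be expanded in two orders, the conditional independence of `Z_i`
and `Z_{<i}` given `(X, Y)` bounds the last term by `I(Z_i; Y | X)`.
-/

open Real Finset

theorem mul_log_add_log_sub_log_sub_log_le {p a b M : ℝ} (hp : 0 ≤ p) (ha : p ≤ a) (hb : p ≤ b)
    (hM : p ≤ M) : p * (log a + log b - log p - log M) ≤ a * b / M - p := by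
  rcases hp.eq_or_lt with rfl | hp
  · simpa using div_nonneg (mul_nonneg ha hb) hM
  have ha := hp.trans_le ha
  have hb := hp.trans_le hb
  have hM := hp.trans_le hM
  calc p * (log a + log b - log p - log M) = p * log (a * b / (p * M)) := by
        rw [log_div (by positivity) (by positivity), log_mul ha.ne' hb.ne', log_mul hp.ne' hM.ne']
        ring
    _ ≤ p * (a * b / (p * M) - 1) := by gcongr; exact log_le_sub_one_of_pos (by positivity)
    _ = a * b / M - p := by field_simp

/-- Nonnegativity of the mutual information of an unnormalised joint distribution `p`. -/
theorem sum_negMulLog_add_negMulLog_sum_le {α β : Type*} [Fintype α] [Fintype β]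
    (p : α → β → ℝ) (hp : ∀ a b, 0 ≤ p a b) :
    ∑ a, ∑ b, negMulLog (p a b) + negMulLog (∑ a, ∑ b, p a b)
      ≤ ∑ a, negMulLog (∑ b, p a b) + ∑ b, negMulLog (∑ a, p a b) := by
  set r := fun a => ∑ b, p a b
  set c := fun b => ∑ a, p a b
  set M := ∑ a, ∑ b, p a b
  have hterm : ∀ a b, p a b * (log (r a) + log (c b) - log (p a b) - log M)
      ≤ r a * c b / M - p a b := fun a b =>
    mul_log_add_log_sub_log_sub_log_le (hp a b)
      (single_le_sum (fun b _ => hp a b) (mem_univ b))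
      (single_le_sum (fun a _ => hp a b) (mem_univ a))
      ((single_le_sum (fun b _ => hp a b) (mem_univ b)).trans
        (single_le_sum (fun a _ => sum_nonneg fun b _ => hp a b) (mem_univ a)))
  have hmass : ∑ a, ∑ b, (r a * c b / M - p a b) = 0 := by
    have hc : ∑ b, c b = M := sum_comm
    simp only [sum_sub_distrib, ← sum_div, ← mul_sum, ← sum_mul, hc]
    rw [mul_self_div_self, sub_self]
  have hsum := sum_le_sum fun a (_ : a ∈ univ) => sum_le_sum fun b (_ : b ∈ univ) => hterm a b
  rw [hmass] at hsum
  have hr : ∑ a, negMulLog (r a) = -∑ a, ∑ b, p a b * log (r a) := by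
    simp only [negMulLog, r, neg_mul, sum_neg_distrib, sum_mul]
  have hc : ∑ b, negMulLog (c b) = -∑ a, ∑ b, p a b * log (c b) := by
    rw [sum_comm (γ := α)]
    simp only [negMulLog, c, neg_mul, sum_neg_distrib, sum_mul]
  have hM : negMulLog M = -∑ a, ∑ b, p a b * log M := by
    simp only [negMulLog, M, neg_mul, sum_mul]
  have hp' : ∑ a, ∑ b, negMulLog (p a b) = -∑ a, ∑ b, p a b * log (p a b) := by
    simp only [negMulLog, neg_mul, sum_neg_distrib]
  simp only [mul_add, mul_sub, sum_add_distrib, sum_sub_distrib] at hsum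
  rw [hr, hc, hM, hp']
  linarith

section Recoding

variable {Ω : Type*} [MeasurableSpace Ω] {μ : Measure Ω}
  {A B C D : Type*} [Fintype A] [Fintype B] [Fintype C] [Fintype D]

theorem mem_range_of_negMulLog_ne_zero {α : Type*} {f : Ω → α} {a : α}
    (h : negMulLog (μ (f ⁻¹' {a})).toReal ≠ 0) : a ∈ Set.range f := by
  by_contra ha
  rw [Set.preimage_singleton_eq_empty.2 ha] at h
  exact h (by simp)

theorem entH_comp_of_injOn (f : Ω → A) {e : A → B} (he : Set.InjOn e (Set.range f)) :
    entH μ (fun ω => e (f ω)) = entH μ f := by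
  have preimage_comp {a : A} (ha : a ∈ Set.range f) :
      (fun ω => e (f ω)) ⁻¹' {e a} = f ⁻¹' {a} :=
    Set.ext fun ω => ⟨fun h => he ⟨ω, rfl⟩ ha h, congrArg e⟩
  refine (sum_bij_ne_zero (fun a _ _ => e a) (fun _ _ _ => mem_univ _) ?_ ?_ ?_).symm
  · intro a _ ha a' _ ha' h
    exact he (mem_range_of_negMulLog_ne_zero ha) (mem_range_of_negMulLog_ne_zero ha') h
  · intro b _ hb
    obtain ⟨ω, rfl⟩ := mem_range_of_negMulLog_ne_zero hb
    refine ⟨f ω, mem_univ _, ?_, rfl⟩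
    rwa [← preimage_comp ⟨ω, rfl⟩]
  · intro a _ ha
    rw [preimage_comp (mem_range_of_negMulLog_ne_zero ha)]

theorem entH_congr {f : Ω → A} {g : Ω → B} (h : ∀ ω ω', f ω = f ω' ↔ g ω = g ω') :
    entH μ f = entH μ g := by
  calc entH μ f = entH μ (fun ω => (f ω, g ω)) :=
        entH_comp_of_injOn (fun ω => (f ω, g ω)) (e := Prod.fst) ?_
    _ = entH μ g := (entH_comp_of_injOn (fun ω => (f ω, g ω)) (e := Prod.snd) ?_).symm
  · rintro _ ⟨ω, rfl⟩ _ ⟨ω', rfl⟩ hω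
    exact Prod.ext hω ((h ω ω').1 hω)
  · rintro _ ⟨ω, rfl⟩ _ ⟨ω', rfl⟩ hω
    exact Prod.ext ((h ω ω').2 hω) hω

theorem condMI_congr {fA : Ω → A} {fB : Ω → B} {fC : Ω → C}
    {A' B' C' : Type*} [Fintype A'] [Fintype B'] [Fintype C']
    {fA' : Ω → A'} {fB' : Ω → B'} {fC' : Ω → C'}
    (hA : ∀ ω ω', fA ω = fA ω' ↔ fA' ω = fA' ω') (hB : ∀ ω ω', fB ω = fB ω' ↔ fB' ω = fB' ω')
    (hC : ∀ ω ω', fC ω = fC ω' ↔ fC' ω = fC' ω') :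
    condMI μ fA fB fC = condMI μ fA' fB' fC' := by
  unfold condMI condEntH
  rw [entH_congr (f := fun ω => (fC ω, fA ω)) (g := fun ω => (fC' ω, fA' ω))
      (by simp only [Prod.mk.injEq, hA, hC, implies_true]),
    entH_congr hC,
    entH_congr (f := fun ω => ((fB ω, fC ω), fA ω)) (g := fun ω => ((fB' ω, fC' ω), fA' ω))
      (by simp only [Prod.mk.injEq, hA, hB, hC, implies_true]),
    entH_congr (f := fun ω => (fB ω, fC ω)) (g := fun ω => (fB' ω, fC' ω))
      (by simp only [Prod.mk.injEq, hB, hC, implies_true])]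

theorem condMI_comm (fA : Ω → A) (fB : Ω → B) (fC : Ω → C) :
    condMI μ fA fB fC = condMI μ fB fA fC := by
  unfold condMI condEntH
  rw [entH_congr (f := fun ω => (fC ω, fA ω)) (g := fun ω => (fA ω, fC ω)) (by grind),
    entH_congr (f := fun ω => (fC ω, fB ω)) (g := fun ω => (fB ω, fC ω)) (by grind),
    entH_congr (f := fun ω => ((fB ω, fC ω), fA ω)) (g := fun ω => ((fA ω, fC ω), fB ω))
      (by grind)]
  ring

theorem condMI_pair_left (fA : Ω → A) (fA' : Ω → D) (fB : Ω → B) (fC : Ω → C) :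
    condMI μ (fun ω => (fA ω, fA' ω)) fB fC
      = condMI μ fA' fB fC + condMI μ fA fB (fun ω => (fA' ω, fC ω)) := by
  unfold condMI condEntH
  rw [entH_congr (f := fun ω => (fC ω, (fA ω, fA' ω)))
      (g := fun ω => ((fA' ω, fC ω), fA ω)) (by grind),
    entH_congr (f := fun ω => ((fB ω, fC ω), (fA ω, fA' ω)))
      (g := fun ω => ((fB ω, (fA' ω, fC ω)), fA ω)) (by grind),
    entH_congr (f := fun ω => (fC ω, fA' ω)) (g := fun ω => (fA' ω, fC ω)) (by grind),
    entH_congr (f := fun ω => ((fB ω, fC ω), fA' ω))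
      (g := fun ω => (fB ω, (fA' ω, fC ω))) (by grind)]
  ring

theorem condMI_pair_right (fA : Ω → A) (fB : Ω → B) (fB' : Ω → D) (fC : Ω → C) :
    condMI μ fA (fun ω => (fB ω, fB' ω)) fC
      = condMI μ fA fB' fC + condMI μ fA fB (fun ω => (fB' ω, fC ω)) := by
  rw [condMI_comm, condMI_pair_left, condMI_comm fB', condMI_comm fB]

theorem condMI_self (fA : Ω → A) (fC : Ω → C) : condMI μ fA fA fC = condEntH μ fA fC := by
  unfold condMI condEntH
  rw [entH_congr (f := fun ω => ((fA ω, fC ω), fA ω))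
    (g := fun ω => (fA ω, fC ω)) (by grind)]
  ring

theorem condMI_of_subsingleton [Subsingleton A] (fA : Ω → A) (fB : Ω → B) (fC : Ω → C) :
    condMI μ fA fB fC = 0 := by
  unfold condMI condEntH
  rw [entH_congr (f := fun ω => (fC ω, fA ω)) (g := fC)
      fun ω ω' => by simp [Subsingleton.elim (fA ω) (fA ω')],
    entH_congr (f := fun ω => ((fB ω, fC ω), fA ω)) (g := fun ω => (fB ω, fC ω))
      fun ω ω' => by simp [Subsingleton.elim (fA ω) (fA ω')]]
  ring

theorem entH_pair_eq_sum (f : Ω → A) (g : Ω → B) :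
    entH μ (fun ω => (f ω, g ω)) = ∑ a, ∑ b, negMulLog (μ.real (f ⁻¹' {a} ∩ g ⁻¹' {b})) := by
  simp only [entH, Fintype.sum_prod_type, ← Set.singleton_prod_singleton, Set.mk_preimage_prod,
    measureReal_def]

end Recoding

section Nonneg

variable {Ω : Type*} [MeasurableSpace Ω] {μ : Measure Ω} [IsFiniteMeasure μ]
  {A B C D : Type*} [Fintype A] [Fintype B] [Fintype C] [Fintype D]
  [MeasurableSpace A] [MeasurableSingletonClass A] [MeasurableSpace B] [MeasurableSingletonClass B]

theorem measureReal_eq_sum_inter_preimage {β : Type*} [Fintype β] [MeasurableSpace β]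
    [MeasurableSingletonClass β] {g : Ω → β} (hg : Measurable g) (s : Set Ω) :
    μ.real s = ∑ b, μ.real (s ∩ g ⁻¹' {b}) := by
  rw [← measureReal_restrict_apply_univ s, ← Set.preimage_univ (f := g), ← coe_univ,
    ← sum_measureReal_preimage_singleton _ fun b _ => hg (measurableSet_singleton b)]
  refine sum_congr rfl fun b _ => ?_
  rw [measureReal_restrict_apply (hg (measurableSet_singleton b)), Set.inter_comm]

theorem sum_negMulLog_inter_add_negMulLog_le {fA : Ω → A} {fB : Ω → B}
    (hA : Measurable fA) (hB : Measurable fB) (s : Set Ω) :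
    ∑ a, ∑ b, negMulLog (μ.real (s ∩ fA ⁻¹' {a} ∩ fB ⁻¹' {b})) + negMulLog (μ.real s)
      ≤ ∑ a, negMulLog (μ.real (s ∩ fA ⁻¹' {a})) + ∑ b, negMulLog (μ.real (s ∩ fB ⁻¹' {b})) := by
  have hrow (a : A) : μ.real (s ∩ fA ⁻¹' {a}) = ∑ b, μ.real (s ∩ fA ⁻¹' {a} ∩ fB ⁻¹' {b}) :=
    measureReal_eq_sum_inter_preimage hB _
  have hcol (b : B) : μ.real (s ∩ fB ⁻¹' {b}) = ∑ a, μ.real (s ∩ fA ⁻¹' {a} ∩ fB ⁻¹' {b}) := by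
    simp only [measureReal_eq_sum_inter_preimage hA (s ∩ fB ⁻¹' {b}), Set.inter_right_comm]
  have htotal : μ.real s = ∑ a, ∑ b, μ.real (s ∩ fA ⁻¹' {a} ∩ fB ⁻¹' {b}) := by
    simp only [measureReal_eq_sum_inter_preimage hA s, hrow]
  rw [htotal]
  simp only [hrow, hcol]
  exact sum_negMulLog_add_negMulLog_sum_le _ fun a b => measureReal_nonneg

theorem condMI_nonneg {fA : Ω → A} {fB : Ω → B} {fC : Ω → C}
    (hA : Measurable fA) (hB : Measurable fB) : 0 ≤ condMI μ fA fB fC := by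
  unfold condMI condEntH
  rw [entH_congr (f := fun ω => ((fB ω, fC ω), fA ω)) (g := fun ω => (fC ω, (fA ω, fB ω)))
      (by grind),
    entH_congr (f := fun ω => (fB ω, fC ω)) (g := fun ω => (fC ω, fB ω)) (by grind),
    entH_pair_eq_sum, entH_pair_eq_sum, entH_pair_eq_sum]
  simp only [Fintype.sum_prod_type, ← Set.singleton_prod_singleton, Set.mk_preimage_prod,
    ← Set.inter_assoc]
  have hslice := sum_le_sum fun c (_ : c ∈ univ) =>
    sum_negMulLog_inter_add_negMulLog_le (μ := μ) hA hB (fC ⁻¹' {c})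
  simp only [sum_add_distrib] at hslice
  simp only [entH, ← measureReal_def]
  linarith

theorem condEntH_nonneg {fA : Ω → A} (hA : Measurable fA) (fC : Ω → C) :
    0 ≤ condEntH μ fA fC :=
  condMI_self (μ := μ) fA fC ▸ condMI_nonneg hA hA

theorem condMI_le_condEntH (fA : Ω → D) {fB : Ω → A} (hB : Measurable fB) (fC : Ω → C) :
    condMI μ fA fB fC ≤ condEntH μ fB fC := by
  rw [condMI_comm, condMI, sub_le_self_iff]
  exact condEntH_nonneg hB _

theorem condMI_le_of_condMI_eq_zero {fA : Ω → A} {fW : Ω → B} (hA : Measurable fA)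
    (hW : Measurable fW) {fY : Ω → D} {fX : Ω → C}
    (hCI : condMI μ fA fW (fun ω => (fX ω, fY ω)) = 0) :
    condMI μ fA fY (fun ω => (fW ω, fX ω)) ≤ condMI μ fA fY fX := by
  have hWY := condMI_pair_right (μ := μ) fA fW fY fX
  have hYW := condMI_pair_right (μ := μ) fA fY fW fX
  have hswap : condMI μ fA (fun ω => (fW ω, fY ω)) fX = condMI μ fA (fun ω => (fY ω, fW ω)) fX :=
    condMI_congr (fun _ _ => Iff.rfl) (by grind) (fun _ _ => Iff.rfl)
  have hCI' : condMI μ fA fW (fun ω => (fY ω, fX ω)) = 0 :=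
    hCI ▸ condMI_congr (fun _ _ => Iff.rfl) (fun _ _ => Iff.rfl) (by grind)
  linarith [condMI_nonneg (μ := μ) (fC := fX) hA hW]

theorem condMI_pair_le {fA : Ω → A} {fW : Ω → B} (hA : Measurable fA) (hW : Measurable fW)
    {fY : Ω → D} {fX : Ω → C} (hCI : condMI μ fA fW (fun ω => (fX ω, fY ω)) = 0) :
    condMI μ (fun ω => (fA ω, fW ω)) fY fX ≤ condMI μ fW fY fX + condMI μ fA fY fX := by
  rw [condMI_pair_left]
  linarith [condMI_le_of_condMI_eq_zero hA hW hCI]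

end Nonneg

theorem condMI_pi_fin_succ {Ω : Type*} [MeasurableSpace Ω] {μ : Measure Ω} {k : ℕ}
    {α : Fin (k + 1) → Type*} [∀ j, Fintype (α j)] {B C : Type*} [Fintype B] [Fintype C]
    (W : ∀ j, Ω → α j) (fB : Ω → B) (fC : Ω → C) :
    condMI μ (fun ω j => W j ω) fB fC
      = condMI μ (fun ω => (W (Fin.last k) ω, fun j : Fin k => W j.castSucc ω)) fB fC :=
  condMI_congr (fun _ _ => (Fin.snocEquiv α).symm.injective.eq_iff.symm)
    (fun _ _ => Iff.rfl) (fun _ _ => Iff.rfl)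

theorem condMI_pi_le_sum {Ω : Type*} [MeasurableSpace Ω] {μ : Measure Ω} [IsFiniteMeasure μ]
    {m : ℕ} {α : Fin m → Type*} [∀ i, Fintype (α i)] [∀ i, MeasurableSpace (α i)]
    [∀ i, MeasurableSingletonClass (α i)] {B C : Type*} [Fintype B] [Fintype C]
    {Z : ∀ i, Ω → α i} (hZ : ∀ i, Measurable (Z i)) {fY : Ω → B} {fX : Ω → C}
    (hCI : ∀ i : Fin m, condMI μ (Z i) (fun ω (j : Fin i.val) => Z (Fin.castLE i.isLt.le j) ω)
        (fun ω => (fX ω, fY ω)) = 0) :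
    condMI μ (fun ω i => Z i ω) fY fX ≤ ∑ i, condMI μ (Z i) fY fX := by
  suffices ∀ k (hk : k ≤ m), condMI μ (fun ω (j : Fin k) => Z (Fin.castLE hk j) ω) fY fX
      ≤ ∑ j : Fin k, condMI μ (Z (Fin.castLE hk j)) fY fX from this m le_rfl
  intro k
  induction k with
  | zero => simp [condMI_of_subsingleton]
  | succ k ih =>
    intro hk
    rw [condMI_pi_fin_succ, Fin.sum_univ_castSucc]
    exact (condMI_pair_le (hZ _) (measurable_pi_lambda _ fun j => hZ _) (hCI ⟨k, hk⟩)).trans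
      (add_le_add_left (ih _) _)

theorem homogeneous_parallel_upper_bound_general
    {Ω : Type*} [MeasurableSpace Ω] (μ : Measure Ω) [IsProbabilityMeasure μ]
    {𝓧 𝓨 : Type*} [Fintype 𝓧] [Fintype 𝓨]
    [MeasurableSpace 𝓨] [DiscreteMeasurableSpace 𝓨]
    {m : ℕ} {𝓩 : Fin m → Type*} [∀ i, Fintype (𝓩 i)]
    [∀ i, MeasurableSpace (𝓩 i)] [∀ i, DiscreteMeasurableSpace (𝓩 i)]
    (X : Ω → 𝓧) (Y : Ω → 𝓨) (Z : ∀ i, Ω → 𝓩 i)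
    (hY : Measurable Y) (hZ : ∀ i, Measurable (Z i))
    (hCI : ∀ i : Fin m, condMI μ (Z i)
        (fun ω (j : Fin i.val) => Z (Fin.castLE i.isLt.le j) ω)
        (fun ω => (X ω, Y ω)) = 0)
    (Ib : ℝ) (hIb : ∀ i : Fin m, condMI μ (Z i) Y X = Ib) :
    condMI μ (fun ω (i : Fin m) => Z i ω) Y X ≤ min (condEntH μ Y X) (m * Ib) := by
  refine le_min (condMI_le_condEntH _ hY X) ?_
  calc condMI μ (fun ω i => Z i ω) Y X ≤ ∑ i, condMI μ (Z i) Y X := condMI_pi_le_sum hZ hCI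
    _ = m * Ib := by simp [hIb]

/-- **Homogeneous parallel upper bound.**
If each `Z i` is conditionally independent of `Z_{<i}` given `(X, Y)` and every call has
single-call information `I(Z i; Y | X) = I_b`, then
`I(Z_{1:m}; Y | X) ≤ min (H(Y | X)) (m · I_b)`. -/
theorem homogeneous_parallel_upper_bound
    {Ω : Type*} [MeasurableSpace Ω] (μ : Measure Ω) [IsProbabilityMeasure μ]
    {𝓧 𝓨 : Type*} [Fintype 𝓧] [Nonempty 𝓧] [Fintype 𝓨] [Nonempty 𝓨]
    [MeasurableSpace 𝓧] [DiscreteMeasurableSpace 𝓧]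
    [MeasurableSpace 𝓨] [DiscreteMeasurableSpace 𝓨]
    {m : ℕ} {𝓩 : Fin m → Type*} [∀ i, Fintype (𝓩 i)] [∀ i, Nonempty (𝓩 i)]
    [∀ i, MeasurableSpace (𝓩 i)] [∀ i, DiscreteMeasurableSpace (𝓩 i)]
    (X : Ω → 𝓧) (Y : Ω → 𝓨) (Z : ∀ i, Ω → 𝓩 i)
    (hX : Measurable X) (hY : Measurable Y) (hZ : ∀ i, Measurable (Z i))
    (hCI : ∀ i : Fin m, condMI μ (Z i)
        (fun ω (j : Fin i.val) => Z (Fin.castLE i.isLt.le j) ω)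
        (fun ω => (X ω, Y ω)) = 0)
    (Ib : ℝ) (hIb : ∀ i : Fin m, condMI μ (Z i) Y X = Ib) :
    condMI μ (fun ω (i : Fin m) => Z i ω) Y X ≤ min (condEntH μ Y X) (m * Ib) :=
  homogeneous_parallel_upper_bound_general μ X Y Z hY hZ hCI Ib hIb
end

section
/- Let X, Y, U_1, …, U_M, and Z̃ = (Z̃^{(1)}, …, Z̃^{(K)}) be finitely-valued random variables on a common probability space P, and let C = (C_{j,k})_{j ≤ M, k ≤ K} be {0,1}-valued random variables. Assume: (a) H(Y | X, U) = 0, where U = (U_1, …, U_M); (b) U_1, …, U_M are mutually conditionally independent given X; (c) H(U | X) = H(Y | X); (d) C is independent of (X, Y, U), P(C_{j,k} = 1) = α ∈ (0,1) for all j, k, and for each fixed j the family {C_{j,k}}_{k=1}^K is mutually independent; (e) for every coverage configuration c with P(C = c) > 0 and every j such that c_{j,k} = 1 for some k, the conditional entropy H(U_j | X, Z̃), computed under the conditional measure P(· | C = c), equals 0. Then the expected residual uncertainty satisfies ∑_c P(C = c) · H(Y | X, Z̃) computed under P(· | C = c) ≤ (1 − α)^K · H(Y | X) ≤ e^{−αK}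 · H(Y | X). -/
open MeasureTheory ProbabilityTheory

/-!
Fix a coverage configuration `c` of positive probability and write `W = (X, Z̃)`. Conditioning
on `C = c` leaves the law of `(X, Y, U)` unchanged, so sufficiency survives it, and under
`P(· | C = c)`

  `H(Y | W) ≤ H(U | W) + H(Y | W, U) ≤ ∑_j H(U_j | W) + H(Y | X, U)`
  `         ≤ ∑_{j uncovered} H(U_j | X)`:

covered bits have `H(U_j | W) = 0`, and conditioning on less only increases entropy. Averaging
over `c`, bit `j` is missed by all `K` channels with probability `(1 - α)^K`, while conditional
independence gives `∑_j H(U_j | X) = H(U | X) = H(Y | X)`. Finally `1 - α ≤ e^{-α}`.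
-/

open Real

section Recoding

variable {Ω : Type*} [MeasurableSpace Ω] {μ : Measure Ω}
  {S T R : Type*} [Fintype S] [Fintype T] [Fintype R]

theorem entH_eq_sum_measureReal (X : Ω → S) :
    entH μ X = ∑ s, negMulLog (μ.real (X ⁻¹' {s})) := rfl

theorem entH_nonneg [IsZeroOrProbabilityMeasure μ] (X : Ω → S) : 0 ≤ entH μ X :=
  Finset.sum_nonneg fun _ _ => negMulLog_nonneg measureReal_nonneg measureReal_le_one

theorem entH_comp_of_injective (X : Ω → S) {g : S → T} (hg : g.Injective) :
    entH μ (fun ω => g (X ω)) = entH μ X := by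
  refine (Fintype.sum_of_injective g hg _ _ (fun t ht => ?_) fun s => ?_).symm
  · have : (fun ω => g (X ω)) ⁻¹' {t} = ∅ :=
      Set.eq_empty_of_forall_notMem fun ω hω => ht ⟨X ω, hω⟩
    simp [this]
  · congr 3
    ext ω
    simp [hg.eq_iff]

theorem condEntH_comp_left_of_injective (Y : Ω → T) (X : Ω → S) {g : T → R}
    (hg : g.Injective) : condEntH μ (fun ω => g (Y ω)) X = condEntH μ Y X := by
  rw [condEntH, condEntH,
    ← entH_comp_of_injective (fun ω => (X ω, Y ω)) (Function.injective_id.prodMap hg)]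
  rfl

theorem condEntH_comp_right_of_injective (Y : Ω → T) (X : Ω → S) {g : S → R}
    (hg : g.Injective) : condEntH μ Y (fun ω => g (X ω)) = condEntH μ Y X := by
  rw [condEntH, condEntH, entH_comp_of_injective X hg,
    ← entH_comp_of_injective (fun ω => (X ω, Y ω)) (hg.prodMap Function.injective_id)]
  rfl

theorem condEntH_comp_self (X : Ω → S) (f : S → T) :
    condEntH μ (fun ω => f (X ω)) X = 0 := by
  rw [condEntH, sub_eq_zero]
  exact entH_comp_of_injective X (g := fun s => (s, f s)) fun _ _ h => congrArg Prod.fst h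

theorem condEntH_pair_eq_add (A : Ω → T) (B : Ω → R) (W : Ω → S) :
    condEntH μ (fun ω => (A ω, B ω)) W
      = condEntH μ A W + condEntH μ B (fun ω => (W ω, A ω)) := by
  have hassoc :
      entH μ (fun ω => (W ω, (A ω, B ω))) = entH μ (fun ω => ((W ω, A ω), B ω)) :=
    entH_comp_of_injective (fun ω => ((W ω, A ω), B ω)) (g := Equiv.prodAssoc S T R)
      (Equiv.prodAssoc S T R).injective
  rw [condEntH, condEntH, condEntH, hassoc]
  ring

end Recoding

section ConditionalEntropy

variable {Ω : Type*} [MeasurableSpace Ω] {μ : Measure Ω}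
  {S T R : Type*} [Fintype S] [Fintype T] [Fintype R]
  [MeasurableSpace S] [MeasurableSingletonClass S]
  [MeasurableSpace T] [MeasurableSingletonClass T]
  [MeasurableSpace R] [MeasurableSingletonClass R]

theorem sum_measureReal_preimage_singleton_eq_one [IsProbabilityMeasure μ] {X : Ω → S}
    (hX : Measurable X) : ∑ s, μ.real (X ⁻¹' {s}) = 1 := by
  rw [sum_measureReal_preimage_singleton _ fun s _ => hX (measurableSet_singleton s)]
  simp

theorem sum_measureReal_preimage_filter [IsFiniteMeasure μ] {X : Ω → S} (hX : Measurable X)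
    (p : S → Prop) [DecidablePred p] :
    ∑ s with p s, μ.real (X ⁻¹' {s}) = μ.real {ω | p (X ω)} := by
  rw [sum_measureReal_preimage_singleton _ fun s _ => hX (measurableSet_singleton s)]
  congr 1
  ext ω
  simp

omit [MeasurableSpace T] [MeasurableSingletonClass T] in
theorem sum_measureReal_preimage_mul_comp [IsFiniteMeasure μ] {X : Ω → S} (hX : Measurable X)
    (g : S → T) (f : T → ℝ) :
    ∑ s, μ.real (X ⁻¹' {s}) * f (g s)
      = ∑ t, μ.real ((fun ω => g (X ω)) ⁻¹' {t}) * f t := by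
  classical
  rw [← Finset.sum_fiberwise Finset.univ g]
  refine Finset.sum_congr rfl fun t _ => ?_
  change _ = μ.real {ω | g (X ω) = t} * f t
  rw [← sum_measureReal_preimage_filter hX (g · = t), Finset.sum_mul]
  exact Finset.sum_congr rfl fun s hs => by rw [(Finset.mem_filter.1 hs).2]

omit [Fintype S] [Fintype T] [MeasurableSpace T] [MeasurableSingletonClass T] in
theorem measureReal_pair_preimage_singleton [IsFiniteMeasure μ] {X : Ω → S} (hX : Measurable X)
    (A : Ω → T) (x : S) (a : T) :
    μ.real ((fun ω => (X ω, A ω)) ⁻¹' {(x, a)})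
      = μ.real (X ⁻¹' {x}) * (μ[|X ⁻¹' {x}]).real (A ⁻¹' {a}) := by
  rw [← Set.singleton_prod_singleton, Set.mk_preimage_prod, measureReal_def, measureReal_def,
    measureReal_def, ← ENNReal.toReal_mul, mul_comm,
    cond_mul_eq_inter (hX (measurableSet_singleton x))]

theorem condEntH_eq_sum_cond [IsFiniteMeasure μ] {X : Ω → S} (hX : Measurable X) {A : Ω → T}
    (hA : Measurable A) :
    condEntH μ A X = ∑ x, μ.real (X ⁻¹' {x}) * entH (μ[|X ⁻¹' {x}]) A := by
  have hfiber : ∀ x, ∑ a, negMulLog (μ.real ((fun ω => (X ω, A ω)) ⁻¹' {(x, a)}))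
      = negMulLog (μ.real (X ⁻¹' {x}))
        + μ.real (X ⁻¹' {x}) * entH (μ[|X ⁻¹' {x}]) A := by
    intro x
    simp_rw [measureReal_pair_preimage_singleton hX, negMulLog_mul, Finset.sum_add_distrib,
      ← Finset.sum_mul, ← Finset.mul_sum, ← entH_eq_sum_measureReal]
    rcases eq_or_ne (μ (X ⁻¹' {x})) 0 with h | h
    · simp [measureReal_def, h]
    · have := cond_isProbabilityMeasure (μ := μ) h
      rw [sum_measureReal_preimage_singleton_eq_one hA, one_mul]
  rw [condEntH, entH_eq_sum_measureReal, Fintype.sum_prod_type]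
  simp_rw [hfiber]
  rw [Finset.sum_add_distrib, ← entH_eq_sum_measureReal]
  ring

theorem condEntH_nonneg_s9 [IsFiniteMeasure μ] {A : Ω → T} (hA : Measurable A) {X : Ω → S}
    (hX : Measurable X) : 0 ≤ condEntH μ A X := by
  rw [condEntH_eq_sum_cond hX hA]
  exact Finset.sum_nonneg fun x _ => mul_nonneg measureReal_nonneg (entH_nonneg A)

theorem measureReal_preimage_eq_sum_cond [IsFiniteMeasure μ] {Z : Ω → R} (hZ : Measurable Z)
    (B : Set Ω) : μ.real B = ∑ z, μ.real (Z ⁻¹' {z}) * (μ[|Z ⁻¹' {z}]).real B := by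
  conv_lhs => rw [← sum_meas_smul_cond_fiber hZ μ]
  rw [Measure.real, Measure.coe_finsetSum, Finset.sum_apply]
  simp only [Measure.smul_apply, smul_eq_mul]
  rw [ENNReal.toReal_sum fun z _ => ENNReal.mul_ne_top (measure_ne_top _ _) (measure_ne_top _ _)]
  simp [measureReal_def]

theorem condEntH_le_entH [IsZeroOrProbabilityMeasure μ] {Y : Ω → T} (hY : Measurable Y)
    {Z : Ω → R} (hZ : Measurable Z) : condEntH μ Y Z ≤ entH μ Y := by
  rcases eq_zero_or_isProbabilityMeasure μ with rfl | _
  · simp [condEntH, entH]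
  -- Jensen for the concave `negMulLog`, against the law of total probability over `Z`.
  rw [condEntH_eq_sum_cond hZ hY]
  simp_rw [entH_eq_sum_measureReal, Finset.mul_sum]
  rw [Finset.sum_comm]
  refine Finset.sum_le_sum fun y _ => ?_
  rw [measureReal_preimage_eq_sum_cond hZ]
  simpa only [smul_eq_mul] using concaveOn_negMulLog.le_map_sum
    (fun z _ => measureReal_nonneg) (sum_measureReal_preimage_singleton_eq_one hZ)
    (fun z _ => Set.mem_Ici.2 measureReal_nonneg)

theorem condEntH_pair_eq_sum_cond [IsFiniteMeasure μ] {Y : Ω → T} (hY : Measurable Y)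
    {X : Ω → S} (hX : Measurable X) {Z : Ω → R} (hZ : Measurable Z) :
    condEntH μ Y (fun ω => (X ω, Z ω))
      = ∑ x, μ.real (X ⁻¹' {x}) * condEntH (μ[|X ⁻¹' {x}]) Y Z := by
  have hcond : ∀ x z,
      μ[|(fun ω => (X ω, Z ω)) ⁻¹' {(x, z)}] = μ[|X ⁻¹' {x}][|Z ⁻¹' {z}] := by
    intro x z
    rw [cond_cond_eq_cond_inter (hX (measurableSet_singleton x)) (hZ (measurableSet_singleton z)),
      ← Set.mk_preimage_prod, Set.singleton_prod_singleton]
  rw [condEntH_eq_sum_cond (hX.prodMk hZ) hY, Fintype.sum_prod_type]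
  refine Finset.sum_congr rfl fun x _ => ?_
  simp_rw [condEntH_eq_sum_cond hZ hY, measureReal_pair_preimage_singleton hX, hcond,
    Finset.mul_sum, mul_assoc]

theorem condEntH_pair_le [IsFiniteMeasure μ] {Y : Ω → T} (hY : Measurable Y) {X : Ω → S}
    (hX : Measurable X) {Z : Ω → R} (hZ : Measurable Z) :
    condEntH μ Y (fun ω => (X ω, Z ω)) ≤ condEntH μ Y X := by
  rw [condEntH_pair_eq_sum_cond hY hX hZ, condEntH_eq_sum_cond hX hY]
  gcongr with x
  exact condEntH_le_entH hY hZ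

theorem condEntH_le_condEntH_comp [IsFiniteMeasure μ] {Y : Ω → T} (hY : Measurable Y)
    {W : Ω → S} (hW : Measurable W) (f : S → R) :
    condEntH μ Y W ≤ condEntH μ Y (fun ω => f (W ω)) := by
  rw [← condEntH_comp_right_of_injective Y W (g := fun s => (f s, s))
    fun s s' h => congrArg Prod.snd h]
  exact condEntH_pair_le hY ((measurable_of_finite f).comp hW) hW

theorem condEntH_le_condEntH_add_condEntH [IsFiniteMeasure μ] {Y : Ω → T} (hY : Measurable Y)
    {A : Ω → R} (hA : Measurable A) {W : Ω → S} (hW : Measurable W) :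
    condEntH μ Y W ≤ condEntH μ A W + condEntH μ Y (fun ω => (W ω, A ω)) := by
  have hswap : condEntH μ (fun ω => (Y ω, A ω)) W = condEntH μ (fun ω => (A ω, Y ω)) W :=
    condEntH_comp_left_of_injective (fun ω => (A ω, Y ω)) W (g := Prod.swap)
      Prod.swap_injective
  have hYA := condEntH_pair_eq_add (μ := μ) Y A W
  have hAY := condEntH_pair_eq_add (μ := μ) A Y W
  have := condEntH_nonneg_s9 (μ := μ) hA (hW.prodMk hY)
  linarith

end ConditionalEntropy

section Tuples

variable {Ω : Type*} [MeasurableSpace Ω] {μ : Measure Ω}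
  {S : Type*} [Fintype S] [MeasurableSpace S] [MeasurableSingletonClass S]

theorem condEntH_pi_le_sum [IsFiniteMeasure μ] {n : ℕ} {E : Fin n → Type*}
    [∀ i, Fintype (E i)] [∀ i, MeasurableSpace (E i)] [∀ i, MeasurableSingletonClass (E i)]
    {U : ∀ i, Ω → E i} (hU : ∀ i, Measurable (U i)) {W : Ω → S} (hW : Measurable W) :
    condEntH μ (fun ω i => U i ω) W ≤ ∑ i, condEntH μ (U i) W := by
  induction n with
  | zero =>
    let empty : S → ∀ i, E i := fun _ i => isEmptyElim i
    have hconst : (fun ω i => U i ω) = fun ω => empty (W ω) :=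
      funext fun _ => Subsingleton.elim _ _
    rw [hconst, condEntH_comp_self W empty, Finset.univ_eq_empty, Finset.sum_empty]
  | succ n ih =>
    have hsplit :
        (fun ω i => U i ω) = fun ω => Fin.consEquiv E (U 0 ω, fun i => U i.succ ω) := by
      funext ω i
      cases i using Fin.cases <;> rfl
    have htail : Measurable fun ω (i : Fin n) => U i.succ ω :=
      measurable_pi_lambda _ fun i => hU _
    rw [hsplit, condEntH_comp_left_of_injective _ _ (Fin.consEquiv E).injective,
      condEntH_pair_eq_add, Fin.sum_univ_succ]
    gcongr
    calc condEntH μ (fun ω (i : Fin n) => U i.succ ω) (fun ω => (W ω, U 0 ω))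
        ≤ condEntH μ (fun ω (i : Fin n) => U i.succ ω) W :=
          condEntH_le_condEntH_comp htail (hW.prodMk (hU 0)) Prod.fst
      _ ≤ ∑ i : Fin n, condEntH μ (U i.succ) W := ih fun i => hU _

theorem entH_pi_eq_sum_of_iIndepFun [IsFiniteMeasure μ] {ι : Type*} [Fintype ι] [DecidableEq ι]
    {E : ι → Type*} [∀ i, Fintype (E i)] [∀ i, MeasurableSpace (E i)]
    [∀ i, MeasurableSingletonClass (E i)] {U : ∀ i, Ω → E i} (hU : ∀ i, Measurable (U i))
    (hind : iIndepFun U μ) :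
    entH μ (fun ω i => U i ω) = ∑ i, entH μ (U i) := by
  set p : (∀ i, E i) → ℝ := fun u => μ.real ((fun ω i => U i ω) ⁻¹' {u})
  have hprod : ∀ u, p u = ∏ i, μ.real (U i ⁻¹' {u i}) := by
    intro u
    have hset : (fun ω i => U i ω) ⁻¹' {u} = ⋂ i ∈ Finset.univ, U i ⁻¹' {u i} := by
      ext ω
      simp [funext_iff]
    simp only [p, hset, measureReal_def,
      hind.measure_inter_preimage_eq_mul _ fun i _ => measurableSet_singleton (u i),
      ENNReal.toReal_prod]
  -- `log` turns the product of the marginals into a sum wherever `p u ≠ 0`.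
  have hlog : ∀ u, negMulLog (p u) = ∑ i, -(p u * log (μ.real (U i ⁻¹' {u i}))) := by
    intro u
    rcases eq_or_ne (p u) 0 with h | h
    · simp [h]
    rw [Finset.sum_neg_distrib, ← Finset.mul_sum, negMulLog, ← log_prod fun i _ => ?_,
      ← hprod]
    · ring
    · exact Finset.prod_ne_zero_iff.1 (hprod u ▸ h) i (Finset.mem_univ i)
  rw [entH_eq_sum_measureReal, Finset.sum_congr rfl fun u _ => hlog u, Finset.sum_comm]
  refine Finset.sum_congr rfl fun i _ => ?_
  rw [Finset.sum_neg_distrib,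
    sum_measureReal_preimage_mul_comp (measurable_pi_lambda _ hU) (fun u => u i)
      fun a => log (μ.real (U i ⁻¹' {a})),
    entH_eq_sum_measureReal, ← Finset.sum_neg_distrib]
  simp only [negMulLog, neg_mul]

theorem condEntH_pi_eq_sum_of_condIndep [IsFiniteMeasure μ] {ι : Type*} [Fintype ι]
    [DecidableEq ι] {E : ι → Type*} [∀ i, Fintype (E i)] [∀ i, MeasurableSpace (E i)]
    [∀ i, MeasurableSingletonClass (E i)] {U : ∀ i, Ω → E i} (hU : ∀ i, Measurable (U i))
    {X : Ω → S} (hX : Measurable X)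
    (hind : ∀ x, μ (X ⁻¹' {x}) ≠ 0 → iIndepFun U (μ[|X ⁻¹' {x}])) :
    condEntH μ (fun ω i => U i ω) X = ∑ i, condEntH μ (U i) X := by
  simp_rw [condEntH_eq_sum_cond hX (measurable_pi_lambda _ hU), condEntH_eq_sum_cond hX (hU _)]
  rw [Finset.sum_comm]
  refine Finset.sum_congr rfl fun x _ => ?_
  rw [← Finset.mul_sum]
  rcases eq_or_ne (μ (X ⁻¹' {x})) 0 with h | h
  · simp [measureReal_def, h]
  · rw [entH_pi_eq_sum_of_iIndepFun hU (hind x h)]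

end Tuples

section Independence

variable {Ω : Type*} [MeasurableSpace Ω] {μ : Measure Ω} [IsFiniteMeasure μ]
  {T V : Type*} [MeasurableSpace T] [MeasurableSingletonClass T]
  [Finite V] [MeasurableSpace V] [MeasurableSingletonClass V]
  {C : Ω → T} {D : Ω → V} {c : T}

theorem measureReal_cond_preimage_of_indepFun (hC : Measurable C) (hCD : IndepFun C D μ)
    (hc : μ (C ⁻¹' {c}) ≠ 0) (B : Set V) :
    (μ[|C ⁻¹' {c}]).real (D ⁻¹' B) = μ.real (D ⁻¹' B) := by
  rw [measureReal_def, measureReal_def, cond_apply (hC (measurableSet_singleton c)),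
    hCD.measure_inter_preimage_eq_mul _ _ (measurableSet_singleton c)
      (Set.toFinite B).measurableSet,
    ← mul_assoc, ENNReal.inv_mul_cancel hc (measure_ne_top _ _), one_mul]

theorem entH_cond_of_indepFun {R : Type*} [Fintype R] (hC : Measurable C)
    (hCD : IndepFun C D μ) (hc : μ (C ⁻¹' {c}) ≠ 0) (g : V → R) :
    entH (μ[|C ⁻¹' {c}]) (fun ω => g (D ω)) = entH μ (fun ω => g (D ω)) :=
  Finset.sum_congr rfl fun t _ =>
    congrArg negMulLog (measureReal_cond_preimage_of_indepFun hC hCD hc (g ⁻¹' {t}))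

theorem condEntH_cond_of_indepFun {R S : Type*} [Fintype R] [Fintype S] (hC : Measurable C)
    (hCD : IndepFun C D μ) (hc : μ (C ⁻¹' {c}) ≠ 0) (g : V → R) (h : V → S) :
    condEntH (μ[|C ⁻¹' {c}]) (fun ω => g (D ω)) (fun ω => h (D ω))
      = condEntH μ (fun ω => g (D ω)) (fun ω => h (D ω)) := by
  rw [condEntH, condEntH, entH_cond_of_indepFun hC hCD hc h,
    entH_cond_of_indepFun hC hCD hc fun v => (h v, g v)]

end Independence

theorem measureReal_forall_eq_false_of_iIndepFun {Ω ι : Type*} [MeasurableSpace Ω]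
    {μ : Measure Ω} [IsProbabilityMeasure μ] [Fintype ι] {B : ι → Ω → Bool}
    (hB : ∀ i, Measurable (B i)) (hind : iIndepFun B μ) {a : ℝ} (ha : 0 ≤ a)
    (hprob : ∀ i, μ {ω | B i ω = true} = ENNReal.ofReal a) :
    μ.real {ω | ∀ i, B i ω = false} = (1 - a) ^ Fintype.card ι := by
  have hfalse : ∀ i, μ.real (B i ⁻¹' {false}) = 1 - a := by
    intro i
    have hcompl : B i ⁻¹' {false} = {ω | B i ω = true}ᶜ := by ext ω; simp
    rw [hcompl, measureReal_compl (s := {ω | B i ω = true}) (hB i (measurableSet_singleton true)),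
      probReal_univ, measureReal_def, hprob, ENNReal.toReal_ofReal ha]
  have hset : {ω | ∀ i, B i ω = false} = ⋂ i ∈ Finset.univ, B i ⁻¹' {false} := by
    ext ω
    simp
  rw [hset, measureReal_def,
    hind.measure_inter_preimage_eq_mul _ fun i _ => measurableSet_singleton _, ENNReal.toReal_prod]
  simp_rw [← measureReal_def, hfalse, Finset.prod_const, Finset.card_univ]

theorem sum_measureReal_preimage_mul_sum_filter {Ω S ι : Type*} [MeasurableSpace Ω]
    {μ : Measure Ω} [IsFiniteMeasure μ] [Fintype S] [MeasurableSpace S]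
    [MeasurableSingletonClass S] [Fintype ι] {X : Ω → S} (hX : Measurable X)
    (P : S → ι → Prop) [∀ s i, Decidable (P s i)] (a : ι → ℝ) :
    ∑ s, μ.real (X ⁻¹' {s}) * ∑ i with P s i, a i
      = ∑ i, μ.real {ω | P (X ω) i} * a i := by
  simp_rw [Finset.mul_sum, Finset.sum_filter]
  rw [Finset.sum_comm]
  refine Finset.sum_congr rfl fun i _ => ?_
  rw [← sum_measureReal_preimage_filter hX (P · i), Finset.sum_mul, Finset.sum_filter]

theorem one_sub_pow_le_exp_neg_mul {a : ℝ} (ha : a ≤ 1) (n : ℕ) :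
    (1 - a) ^ n ≤ exp (-(a * n)) :=
  calc (1 - a) ^ n ≤ exp (-a) ^ n := pow_le_pow_left₀ (by linarith) (one_sub_le_exp_neg a) n
    _ = exp (-(a * n)) := by rw [← exp_nat_mul]; ring_nf

theorem condEntH_le_sum_uncovered {Ω S T R : Type*} [MeasurableSpace Ω] {ν : Measure Ω}
    [IsFiniteMeasure ν] [Fintype S] [MeasurableSpace S] [MeasurableSingletonClass S]
    [Fintype T] [MeasurableSpace T] [MeasurableSingletonClass T]
    [Fintype R] [MeasurableSpace R] [MeasurableSingletonClass R]
    {n : ℕ} {E : Fin n → Type*} [∀ j, Fintype (E j)] [∀ j, MeasurableSpace (E j)]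
    [∀ j, MeasurableSingletonClass (E j)]
    {X : Ω → S} {Y : Ω → T} {U : ∀ j, Ω → E j} {Z : Ω → R} (hX : Measurable X)
    (hY : Measurable Y) (hU : ∀ j, Measurable (U j)) (hZ : Measurable Z)
    (covered : Fin n → Prop) [DecidablePred covered]
    (hsuff : condEntH ν Y (fun ω => (X ω, fun j => U j ω)) = 0)
    (hcov : ∀ j, covered j → condEntH ν (U j) (fun ω => (X ω, Z ω)) = 0) :
    condEntH ν Y (fun ω => (X ω, Z ω)) ≤ ∑ j with ¬covered j, condEntH ν (U j) X := by
  have hW : Measurable fun ω => (X ω, Z ω) := hX.prodMk hZ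
  have hUpi : Measurable fun ω j => U j ω := measurable_pi_lambda _ hU
  calc condEntH ν Y (fun ω => (X ω, Z ω))
      ≤ condEntH ν (fun ω j => U j ω) (fun ω => (X ω, Z ω))
        + condEntH ν Y (fun ω => ((X ω, Z ω), fun j => U j ω)) :=
          condEntH_le_condEntH_add_condEntH hY hUpi hW
    _ ≤ ∑ j, condEntH ν (U j) (fun ω => (X ω, Z ω)) + 0 := by
        gcongr
        · exact condEntH_pi_le_sum hU hW
        · exact (condEntH_le_condEntH_comp hY (hW.prodMk hUpi) fun p => (p.1.1, p.2)).trans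
            hsuff.le
    _ = ∑ j with ¬covered j, condEntH ν (U j) (fun ω => (X ω, Z ω)) := by
        rw [add_zero, ← Finset.sum_filter_add_sum_filter_not _ covered,
          Finset.sum_eq_zero fun j hj => hcov j (Finset.mem_filter.1 hj).2, zero_add]
    _ ≤ ∑ j with ¬covered j, condEntH ν (U j) X :=
        Finset.sum_le_sum fun j _ => condEntH_le_condEntH_comp (hU j) hW Prod.fst

theorem geometric_contraction_effective_channels_general
    {Ω : Type*} [MeasurableSpace Ω] (μ : Measure Ω) [IsProbabilityMeasure μ]
    {𝓧 𝓨 : Type*} [Fintype 𝓧] [Fintype 𝓨]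
    [MeasurableSpace 𝓧] [DiscreteMeasurableSpace 𝓧]
    [MeasurableSpace 𝓨] [DiscreteMeasurableSpace 𝓨]
    {M K : ℕ}
    {𝓤 : Fin M → Type*} [∀ j, Fintype (𝓤 j)]
    [∀ j, MeasurableSpace (𝓤 j)] [∀ j, DiscreteMeasurableSpace (𝓤 j)]
    {𝓩 : Fin K → Type*} [∀ k, Fintype (𝓩 k)]
    [∀ k, MeasurableSpace (𝓩 k)] [∀ k, DiscreteMeasurableSpace (𝓩 k)]
    (X : Ω → 𝓧) (Y : Ω → 𝓨) (U : ∀ j, Ω → 𝓤 j) (Ztil : ∀ k, Ω → 𝓩 k)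
    (C : Ω → (Fin M → Fin K → Bool))
    (hX : Measurable X) (hY : Measurable Y) (hU : ∀ j, Measurable (U j))
    (hZtil : ∀ k, Measurable (Ztil k)) (hC : Measurable C)
    {α : ℝ} (hα : α ∈ Set.Ioo (0 : ℝ) 1)
    -- (a) sufficiency: H(Y | X, U) = 0
    (ha : condEntH μ Y (fun ω => (X ω, fun j => U j ω)) = 0)
    -- (b) the U_j are mutually conditionally independent given X
    (hb : ∀ x : 𝓧, μ (X ⁻¹' {x}) ≠ 0 →
        iIndepFun U (μ[|X ⁻¹' {x}]))
    -- (c) matching uncertainty scale: H(U | X) = H(Y | X)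
    (hc : condEntH μ (fun ω (j : Fin M) => U j ω) X = condEntH μ Y X)
    -- (d) coverage indicators: independent of (X, Y, U), each of probability α,
    --     and independent across channels for each fixed bit j
    (hd1 : IndepFun C (fun ω => (X ω, Y ω, fun j => U j ω)) μ)
    (hd2 : ∀ j k, μ {ω | C ω j k = true} = ENNReal.ofReal α)
    (hd3 : ∀ j : Fin M, iIndepFun (fun k ω => C ω j k) μ)
    -- (e) a covered bit has zero residual entropy given (X, Z̃)
    (he : ∀ c : Fin M → Fin K → Bool, μ (C ⁻¹' {c}) ≠ 0 → ∀ j : Fin M,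
        (∃ k, c j k = true) →
        condEntH (μ[|C ⁻¹' {c}]) (U j) (fun ω => (X ω, fun k => Ztil k ω)) = 0) :
    (∑ c : Fin M → Fin K → Bool, (μ (C ⁻¹' {c})).toReal *
        condEntH (μ[|C ⁻¹' {c}]) Y (fun ω => (X ω, fun k => Ztil k ω)))
      ≤ (1 - α) ^ K * condEntH μ Y X ∧
    (1 - α) ^ K * condEntH μ Y X ≤ Real.exp (-(α * K)) * condEntH μ Y X := by
  obtain ⟨hα₀, hα₁⟩ := hα
  have hZ : Measurable fun ω (k : Fin K) => Ztil k ω := measurable_pi_lambda _ hZtil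
  have hUX : ∑ j, condEntH μ (U j) X = condEntH μ Y X := by
    rw [← hc, condEntH_pi_eq_sum_of_condIndep hU hX hb]
  have hconfig : ∀ c, μ.real (C ⁻¹' {c}) *
      condEntH (μ[|C ⁻¹' {c}]) Y (fun ω => (X ω, fun k => Ztil k ω))
        ≤ μ.real (C ⁻¹' {c}) * ∑ j with ¬∃ k, c j k = true, condEntH μ (U j) X := by
    intro c
    rcases eq_or_ne (μ (C ⁻¹' {c})) 0 with h0 | h0
    · simp [measureReal_def, h0]
    refine mul_le_mul_of_nonneg_left ?_ measureReal_nonneg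
    have hsuff :=
      (condEntH_cond_of_indepFun hC hd1 h0 (fun d => d.2.1) fun d => (d.1, d.2.2)).trans ha
    refine (condEntH_le_sum_uncovered hX hY hU hZ _ hsuff (he c h0)).trans_eq ?_
    exact Finset.sum_congr rfl fun j _ =>
      condEntH_cond_of_indepFun hC hd1 h0 (fun d => d.2.2 j) Prod.fst
  have hCjk : ∀ j k, Measurable fun ω => C ω j k := fun j k => by fun_prop
  refine ⟨?_, ?_⟩
  · calc _ ≤ ∑ c, μ.real (C ⁻¹' {c}) *
              ∑ j with ¬∃ k, c j k = true, condEntH μ (U j) X :=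
            Finset.sum_le_sum fun c _ => hconfig c
      _ = ∑ j, μ.real {ω | ¬∃ k, C ω j k = true} * condEntH μ (U j) X :=
          sum_measureReal_preimage_mul_sum_filter hC _ _
      _ = (1 - α) ^ K * condEntH μ Y X := by
          simp_rw [not_exists, Bool.not_eq_true,
            measureReal_forall_eq_false_of_iIndepFun (hCjk _) (hd3 _) hα₀.le (hd2 _),
            Fintype.card_fin]
          rw [← Finset.mul_sum, hUX]
  · exact mul_le_mul_of_nonneg_right (one_sub_pow_le_exp_neg_mul hα₁.le K)
      (condEntH_nonneg_s9 hY hX)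

/-- **Geometric contraction with effective channels.**
Under the independent evidence-bits model (sufficiency, conditional independence given `X`,
matching uncertainty scale) and the fractional-coverage model (coverage indicators `C`
independent of `(X, Y, U)`, each with probability `α`, independent across channels for each
fixed bit, and a covered bit has zero residual entropy), the expected residual uncertainty
satisfies `E_c[H(Y | X, Z̃)] ≤ (1 − α)^K · H(Y | X) ≤ e^{−αK} · H(Y | X)`. -/
theorem geometric_contraction_effective_channels
    {Ω : Type*} [MeasurableSpace Ω] (μ : Measure Ω) [IsProbabilityMeasure μ]
    {𝓧 𝓨 : Type*} [Fintype 𝓧] [Nonempty 𝓧] [Fintype 𝓨] [Nonempty 𝓨]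
    [MeasurableSpace 𝓧] [DiscreteMeasurableSpace 𝓧]
    [MeasurableSpace 𝓨] [DiscreteMeasurableSpace 𝓨]
    {M K : ℕ} (hM : 0 < M) (hK : 0 < K)
    {𝓤 : Fin M → Type*} [∀ j, Fintype (𝓤 j)] [∀ j, Nonempty (𝓤 j)]
    [∀ j, MeasurableSpace (𝓤 j)] [∀ j, DiscreteMeasurableSpace (𝓤 j)]
    {𝓩 : Fin K → Type*} [∀ k, Fintype (𝓩 k)] [∀ k, Nonempty (𝓩 k)]
    [∀ k, MeasurableSpace (𝓩 k)] [∀ k, DiscreteMeasurableSpace (𝓩 k)]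
    (X : Ω → 𝓧) (Y : Ω → 𝓨) (U : ∀ j, Ω → 𝓤 j) (Ztil : ∀ k, Ω → 𝓩 k)
    (C : Ω → (Fin M → Fin K → Bool))
    (hX : Measurable X) (hY : Measurable Y) (hU : ∀ j, Measurable (U j))
    (hZtil : ∀ k, Measurable (Ztil k)) (hC : Measurable C)
    {α : ℝ} (hα : α ∈ Set.Ioo (0 : ℝ) 1)
    -- (a) sufficiency: H(Y | X, U) = 0
    (ha : condEntH μ Y (fun ω => (X ω, fun j => U j ω)) = 0)
    -- (b) the U_j are mutually conditionally independent given X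
    (hb : ∀ x : 𝓧, μ (X ⁻¹' {x}) ≠ 0 →
        iIndepFun U (μ[|X ⁻¹' {x}]))
    -- (c) matching uncertainty scale: H(U | X) = H(Y | X)
    (hc : condEntH μ (fun ω (j : Fin M) => U j ω) X = condEntH μ Y X)
    -- (d) coverage indicators: independent of (X, Y, U), each of probability α,
    --     and independent across channels for each fixed bit j
    (hd1 : IndepFun C (fun ω => (X ω, Y ω, fun j => U j ω)) μ)
    (hd2 : ∀ j k, μ {ω | C ω j k = true} = ENNReal.ofReal α)
    (hd3 : ∀ j : Fin M, iIndepFun (fun k ω => C ω j k) μ)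
    -- (e) a covered bit has zero residual entropy given (X, Z̃)
    (he : ∀ c : Fin M → Fin K → Bool, μ (C ⁻¹' {c}) ≠ 0 → ∀ j : Fin M,
        (∃ k, c j k = true) →
        condEntH (μ[|C ⁻¹' {c}]) (U j) (fun ω => (X ω, fun k => Ztil k ω)) = 0) :
    (∑ c : Fin M → Fin K → Bool, (μ (C ⁻¹' {c})).toReal *
        condEntH (μ[|C ⁻¹' {c}]) Y (fun ω => (X ω, fun k => Ztil k ω)))
      ≤ (1 - α) ^ K * condEntH μ Y X ∧
    (1 - α) ^ K * condEntH μ Y X ≤ Real.exp (-(α * K)) * condEntH μ Y X :=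
  geometric_contraction_effective_channels_general μ X Y U Ztil C hX hY hU hZtil hC hα ha hb hc hd1
    hd2 hd3 he
end
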